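/- arXiv:2006.00565 — 8 statements merged into one kernel-verified Lean document; each statement's English description precedes it below -/
import Mathlib

section
/- The number of closed Deutsch paths of length n equals the n-th Riordan number, i.e., the sequence of counts of closed Deutsch paths of length n = 0, 1, 2, 3, 4, 5, 6, 7 is 1, 0, 1, 1, 3, 6, 15, 36. -/
open Finset Nat

def IsDeutsch (l : List ℤ) : Prop :=
  (∀ s ∈ l, s = 1 ∨ s ≤ -1) ∧ ∀ n : ℕ, 0 ≤ (l.take n).sum

/-- Number of closed Deutsch paths of length `n`. -/
noncomputable def deutschCount (n : ℕ) : ℕ :=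
  Nat.card {l : List ℤ // IsDeutsch l ∧ l.length = n ∧ l.sum = 0}

/-! ### Auxiliary counting functions -/

/-- `dg n h` : number of Deutsch paths of length `n` from height `h` down to `0`. -/
def dg : ℕ → ℕ → ℕ
  | 0, h => if h = 0 then 1 else 0
  | n+1, h => dg n (h+1) + ∑ j ∈ Finset.range h, dg n j

/-- `GG n h` : same but with flat steps allowed (binomial transform of `dg`). -/
def GG : ℕ → ℕ → ℕ
  | 0, h => if h = 0 then 1 else 0
  | n+1, h => GG n (h+1) + ∑ j ∈ Finset.range (h+1), GG n j

/-- Finset model of Deutsch paths from height `h`, length `n`. -/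
def DF : ℕ → ℕ → Finset (List ℤ)
  | 0, h => if h = 0 then {([] : List ℤ)} else ∅
  | n+1, h => ((DF n (h+1)).image (fun l => (1:ℤ) :: l)) ∪
      (Finset.range h).biUnion (fun j => (DF n j).image (fun l => ((j : ℤ) - (h : ℤ)) :: l))

lemma card_DF (n : ℕ) : ∀ h, (DF n h).card = dg n h := by
  induction n with
  | zero => intro h; by_cases hh : h = 0 <;> simp [DF, dg, hh]
  | succ n ih =>
    intro h
    have hdisj : Disjoint ((DF n (h+1)).image (fun l => (1:ℤ) :: l))
        ((Finset.range h).biUnion (fun j => (DF n j).image (fun l => ((j : ℤ) - (h : ℤ)) :: l))) := by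
      simp only [Finset.disjoint_left, Finset.mem_image, Finset.mem_biUnion]
      rintro l ⟨a, _, rfl⟩ ⟨j, hj, b, _, h2⟩
      simp only [List.cons.injEq] at h2
      have := h2.1
      simp only [Finset.mem_range] at hj
      omega
    rw [DF, dg, Finset.card_union_of_disjoint hdisj,
      Finset.card_image_of_injective _ (fun a b => by simp),
      Finset.card_biUnion]
    · rw [ih]
      congr 1
      refine Finset.sum_congr rfl fun j hj => ?_
      rw [Finset.card_image_of_injective _ (fun a b => by simp), ih]
    · intro x hx y hy hxy
      simp only [Finset.disjoint_left, Finset.mem_image]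
      rintro l ⟨a, _, rfl⟩ ⟨b, _, h2⟩
      simp only [List.cons.injEq] at h2
      have := h2.1
      exact hxy (by omega)

def Pred (h : ℕ) (l : List ℤ) : Prop :=
  (∀ s ∈ l, s = 1 ∨ s ≤ -1) ∧ (∀ i : ℕ, 0 ≤ (h:ℤ) + (l.take i).sum) ∧ (h:ℤ) + l.sum = 0

lemma mem_DF (n : ℕ) : ∀ h (l : List ℤ), l ∈ DF n h ↔ (Pred h l ∧ l.length = n) := by
  induction n with
  | zero =>
    intro h l
    by_cases hh : h = 0
    · subst hh
      simp only [DF, if_true, Finset.mem_singleton]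
      constructor
      · rintro rfl; exact ⟨⟨by simp, by simp, by simp⟩, rfl⟩
      · rintro ⟨_, hl⟩; exact List.length_eq_zero_iff.mp hl
    · simp only [DF, hh, if_false, Finset.notMem_empty, false_iff, not_and]
      rintro ⟨_, _, hsum⟩ hl
      have : l = [] := List.length_eq_zero_iff.mp hl
      subst this
      simp only [List.sum_nil, add_zero] at hsum
      omega
  | succ n ih =>
    intro h l
    rw [DF]
    simp only [Finset.mem_union, Finset.mem_image, Finset.mem_biUnion, Finset.mem_range]
    constructor
    · rintro (⟨t, ht, rfl⟩ | ⟨j, hj, t, ht, rfl⟩)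
      · obtain ⟨⟨he, hp, hs⟩, hlen⟩ := (ih _ t).mp ht
        refine ⟨⟨?_, ?_, ?_⟩, by simp [hlen]⟩
        · intro s hs'
          rcases List.mem_cons.mp hs' with rfl | hs'
          · left; rfl
          · exact he s hs'
        · intro i
          cases i with
          | zero => simp
          | succ i =>
            have := hp i
            simp only [List.take_succ_cons, List.sum_cons]
            push_cast at this ⊢
            linarith
        · simp only [List.sum_cons]
          push_cast at hs ⊢
          linarith
      · obtain ⟨⟨he, hp, hs⟩, hlen⟩ := (ih _ t).mp ht
        refine ⟨⟨?_, ?_, ?_⟩, by simp [hlen]⟩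
        · intro s hs'
          rcases List.mem_cons.mp hs' with rfl | hs'
          · right; omega
          · exact he s hs'
        · intro i
          cases i with
          | zero => simp
          | succ i =>
            have := hp i
            simp only [List.take_succ_cons, List.sum_cons]
            linarith
        · simp only [List.sum_cons]
          linarith
    · rintro ⟨⟨he, hp, hs⟩, hlen⟩
      cases l with
      | nil => simp at hlen
      | cons a t =>
        simp only [List.length_cons, Nat.succ_inj] at hlen
        have hpt : ∀ i : ℕ, 0 ≤ (h:ℤ) + a + (t.take i).sum := by
          intro i
          have := hp (i+1)
          simp only [List.take_succ_cons, List.sum_cons] at this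
          linarith
        have hst : (h:ℤ) + a + t.sum = 0 := by
          simp only [List.sum_cons] at hs; linarith
        have het : ∀ s ∈ t, s = 1 ∨ s ≤ -1 := fun s hs' => he s (List.mem_cons_of_mem a hs')
        rcases he a List.mem_cons_self with rfl | ha
        · left
          refine ⟨t, (ih _ t).mpr ⟨⟨het, ?_, ?_⟩, hlen⟩, rfl⟩
          · intro i; have := hpt i; push_cast; linarith
          · push_cast; linarith
        · right
          have h1 : 0 ≤ (h:ℤ) + a := by
            have := hp 1
            simpa using this
          have hcast : (((h:ℤ)+a).toNat : ℤ) = (h:ℤ) + a := Int.toNat_of_nonneg h1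
          refine ⟨((h:ℤ) + a).toNat, ?_, t, (ih _ t).mpr ⟨⟨het, ?_, ?_⟩, hlen⟩, ?_⟩
          · omega
          · intro i; rw [hcast]; exact hpt i
          · rw [hcast]; linarith
          · rw [hcast]; ring_nf

lemma deutschCount_eq_dg (n : ℕ) : deutschCount n = dg n 0 := by
  rw [deutschCount]
  have e : {l : List ℤ // IsDeutsch l ∧ l.length = n ∧ l.sum = 0} ≃ {l : List ℤ // l ∈ DF n 0} := by
    apply Equiv.subtypeEquivRight
    intro l
    rw [mem_DF]
    unfold IsDeutsch Pred
    constructor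
    · rintro ⟨⟨he, hp⟩, hlen, hsum⟩
      exact ⟨⟨he, fun i => by simpa using hp i, by simpa using hsum⟩, hlen⟩
    · rintro ⟨⟨he, hp, hsum⟩, hlen⟩
      exact ⟨⟨he, fun i => by simpa using hp i⟩, hlen, by simpa using hsum⟩
  rw [Nat.card_congr e]
  simp [Nat.card_eq_fintype_card, card_DF]

/-! ### `GG` is the binomial transform of `dg` -/

lemma GG_eq_sum (n : ℕ) : ∀ h, GG n h = ∑ k ∈ range (n+1), n.choose k * dg k h := by
  induction n with
  | zero => intro h; simp [GG, dg]
  | succ n ih =>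
    intro h
    have step : GG (n+1) h = ∑ k ∈ range (n+1), n.choose k * (dg (k+1) h + dg k h) := by
      rw [GG, ih (h+1)]
      have hsw : ∑ j ∈ range (h+1), GG n j
          = ∑ k ∈ range (n+1), n.choose k * ∑ j ∈ range (h+1), dg k j := by
        calc ∑ j ∈ range (h+1), GG n j
            = ∑ j ∈ range (h+1), ∑ k ∈ range (n+1), n.choose k * dg k j :=
              Finset.sum_congr rfl fun j _ => ih j
          _ = ∑ k ∈ range (n+1), ∑ j ∈ range (h+1), n.choose k * dg k j := Finset.sum_comm
          _ = _ := by simp [Finset.mul_sum]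
      rw [hsw, ← Finset.sum_add_distrib]
      refine Finset.sum_congr rfl fun k _ => ?_
      have : dg (k+1) h + dg k h = dg k (h+1) + ∑ j ∈ range (h+1), dg k j := by
        rw [Finset.sum_range_succ]
        show dg (k+1) h + dg k h = dg k (h+1) + (∑ j ∈ range h, dg k j + dg k h)
        rw [dg]
        ring
      rw [this, Nat.mul_add]
    rw [step]
    rw [Finset.sum_range_succ' (fun k => (n+1).choose k * dg k h) (n+1)]
    simp only [Nat.choose_succ_succ, Nat.choose_zero_right, one_mul, Nat.add_mul,
      Finset.sum_add_distrib, Nat.mul_add, Nat.succ_eq_add_one]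
    have h2 : ∑ k ∈ range (n+1), n.choose (k+1) * dg (k+1) h + dg 0 h
        = ∑ k ∈ range (n+1), n.choose k * dg k h := by
      rw [Finset.sum_range_succ]
      simp only [Nat.choose_succ_self, Nat.zero_mul, Nat.add_zero]
      rw [Finset.sum_range_succ' (fun k => n.choose k * dg k h) n]
      simp
    have h3 : ∑ k ∈ range (n+1), n.choose k * (dg (k+1) h + dg k h)
        = ∑ k ∈ range (n+1), n.choose k * dg (k+1) h + ∑ k ∈ range (n+1), n.choose k * dg k h := by
      rw [← Finset.sum_add_distrib]
      exact Finset.sum_congr rfl fun k _ => Nat.mul_add _ _ _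
    omega

/-! ### `GG n 0 = catalan n` -/

lemma GG_one (h : ℕ) : GG 1 h = 1 := by
  show GG 0 (h+1) + ∑ j ∈ Finset.range (h+1), GG 0 j = 1
  have : ∀ j, GG 0 j = if j = 0 then 1 else 0 := fun j => rfl
  simp [this, Finset.sum_ite_eq' (Finset.range (h+1)) 0]

lemma hockey (A r : ℕ) : ∀ h : ℕ,
    (∑ j ∈ range (h+1), (A+j).choose r) + A.choose (r+1) = (A+h+1).choose (r+1) := by
  intro h
  induction h with
  | zero => simp [Nat.choose_succ_succ']
  | succ h ih =>
    rw [Finset.sum_range_succ, Nat.add_right_comm, ih, show A+(h+1) = A+h+1 by ring]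
    rw [Nat.choose_succ_succ' (A+h+1) r]
    omega

lemma hockeyZ (A r h : ℕ) :
    (∑ j ∈ range (h+1), ((A+j).choose r : ℤ)) = (A+h+1).choose (r+1) - A.choose (r+1) := by
  have := hockey A r h
  have := congrArg (fun x : ℕ => (x : ℤ)) this
  push_cast at this
  linarith

lemma GG_formula (m : ℕ) : ∀ h, (GG (m+2) h : ℤ)
    = (2*m+h+3).choose (m+1) - (2*m+h+3).choose m := by
  induction m with
  | zero =>
    intro h
    have : GG 2 h = GG 1 (h+1) + ∑ j ∈ Finset.range (h+1), GG 1 j := rfl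
    rw [this]
    simp only [GG_one, Finset.sum_const, Finset.card_range, smul_eq_mul, mul_one]
    have h1 : (2*0+h+3).choose (0+1) = h+3 := by
      rw [show 2*0+h+3 = h+3 by ring]
      exact Nat.choose_one_right (h+3)
    have h2 : (2*0+h+3).choose 0 = 1 := Nat.choose_zero_right _
    rw [h1, h2]
    push_cast
    ring
  | succ m ih =>
    intro h
    have hrec : GG (m+3) h = GG (m+2) (h+1) + ∑ j ∈ Finset.range (h+1), GG (m+2) j := rfl
    have hs1 : (∑ j ∈ range (h+1), ((GG (m+2) j : ℤ)))
        = ∑ j ∈ range (h+1), (((2*m+3+j).choose (m+1) : ℤ) - ((2*m+3+j).choose m : ℤ)) := by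
      refine Finset.sum_congr rfl fun j _ => ?_
      rw [ih j, show 2*m+j+3 = 2*m+3+j by ring]
    have hsum : (∑ j ∈ range (h+1), ((GG (m+2) j : ℤ)))
        = ((2*m+3+h+1).choose (m+2) - (2*m+3).choose (m+2))
          - ((2*m+3+h+1).choose (m+1) - (2*m+3).choose (m+1)) := by
      rw [hs1, Finset.sum_sub_distrib, hockeyZ (2*m+3) (m+1) h, hockeyZ (2*m+3) m h]
    have hcast : (GG (m+3) h : ℤ)
        = (GG (m+2) (h+1) : ℤ) + ∑ j ∈ range (h+1), ((GG (m+2) j : ℤ)) := by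
      rw [hrec]; push_cast; ring
    rw [hcast, hsum, ih (h+1)]
    have e1 : 2*m+(h+1)+3 = 2*m+3+h+1 := by ring
    rw [e1]
    have sym : (2*m+3).choose (m+2) = (2*m+3).choose (m+1) := by
      have := Nat.choose_symm_half (m+1)
      rw [show 2*(m+1)+1 = 2*m+3 by ring] at this
      exact this
    have p1 : (2*(m+1)+h+3).choose (m+2)
        = (2*m+3+h+1).choose (m+1) + (2*m+3+h+1).choose (m+2) := by
      rw [show 2*(m+1)+h+3 = (2*m+3+h+1)+1 by ring]
      exact Nat.choose_succ_succ' (2*m+3+h+1) (m+1)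
    have p2 : (2*(m+1)+h+3).choose (m+1)
        = (2*m+3+h+1).choose m + (2*m+3+h+1).choose (m+1) := by
      rw [show 2*(m+1)+h+3 = (2*m+3+h+1)+1 by ring]
      exact Nat.choose_succ_succ' (2*m+3+h+1) m
    rw [p1, p2, sym]
    push_cast
    ring

lemma GG_catalan : ∀ n, GG n 0 = catalan n := by
  intro n
  match n with
  | 0 => simp [GG, catalan_zero]
  | 1 => rw [GG_one, catalan_one]
  | (m+2) =>
    have hf := GG_formula m 0
    have key : ((m+3) : ℤ) * (GG (m+2) 0 : ℤ) = ((m+3) : ℤ) * (catalan (m+2) : ℤ) := by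
      rw [hf]
      have habs : ((2*m+3).choose (m+1)) * (m+1) = ((2*m+3).choose m) * (2*m+3-m) :=
        Nat.choose_succ_right_eq (2*m+3) m
      have hsub : 2*m+3-m = m+3 := by omega
      rw [hsub] at habs
      have hsym : (2*m+3).choose (m+2) = (2*m+3).choose (m+1) := by
        have := Nat.choose_symm_half (m+1)
        rw [show 2*(m+1)+1 = 2*m+3 by ring] at this
        exact this
      have hpas : (2*m+4).choose (m+2) = (2*m+3).choose (m+1) + (2*m+3).choose (m+2) :=
        Nat.choose_succ_succ' (2*m+3) (m+1)
      have hcb : (m+3) * catalan (m+2) = (2*m+4).choose (m+2) := by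
        have := succ_mul_catalan_eq_centralBinom (m+2)
        rw [Nat.centralBinom] at this
        rw [show 2*(m+2) = 2*m+4 by ring] at this
        exact this
      have habsZ : ((2*m+3).choose (m+1) : ℤ) * (m+1) = ((2*m+3).choose m : ℤ) * (m+3) := by
        exact_mod_cast congrArg (fun x : ℕ => (x:ℤ)) habs
      have hcbZ : ((m:ℤ)+3) * (catalan (m+2) : ℤ)
          = ((2*m+3).choose (m+1) : ℤ) + ((2*m+3).choose (m+1) : ℤ) := by
        have : ((m+3) * catalan (m+2) : ℕ)
            = ((2*m+3).choose (m+1) + (2*m+3).choose (m+1) : ℕ) := by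
          rw [hcb, hpas, hsym]
        exact_mod_cast congrArg (fun x : ℕ => (x:ℤ)) this
      rw [hcbZ]
      linarith
    have := mul_left_cancel₀ (show ((m+3):ℤ) ≠ 0 by positivity) key
    exact_mod_cast this

/-! ### Binomial inversion -/

lemma choose_trin (n j i : ℕ) :
    n.choose (j+i) * (j+i).choose j = n.choose j * (n-j).choose i := by
  by_cases h : j + i ≤ n
  · have h1 : j ≤ n := le_trans (Nat.le_add_right j i) h
    have h2 : j ≤ j + i := Nat.le_add_right j i
    have h3 : i ≤ n - j := by omega
    have key : (n.choose (j+i) * (j+i).choose j : ℚ) = (n.choose j * (n-j).choose i : ℚ) := by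
      -- (cast already in ℤ)
      rw [Nat.cast_choose ℚ h, Nat.cast_choose ℚ h1, Nat.cast_choose ℚ h2, Nat.cast_choose ℚ h3]
      have e1 : j + i - j = i := by omega
      have e2 : n - j - i = n - (j+i) := by omega
      rw [e1, e2]
      have f1 : ((Nat.factorial (j+i)) : ℚ) ≠ 0 := by exact_mod_cast Nat.factorial_ne_zero _
      have f2 : ((Nat.factorial (n-(j+i))) : ℚ) ≠ 0 := by exact_mod_cast Nat.factorial_ne_zero _
      have f3 : ((Nat.factorial j) : ℚ) ≠ 0 := by exact_mod_cast Nat.factorial_ne_zero _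
      have f4 : ((Nat.factorial i) : ℚ) ≠ 0 := by exact_mod_cast Nat.factorial_ne_zero _
      have f5 : ((Nat.factorial (n-j)) : ℚ) ≠ 0 := by exact_mod_cast Nat.factorial_ne_zero _
      field_simp
    exact_mod_cast key
  · push_neg at h
    rw [Nat.choose_eq_zero_of_lt h, Nat.zero_mul]
    by_cases hj : j ≤ n
    · have : n - j < i := by omega
      rw [Nat.choose_eq_zero_of_lt this, Nat.mul_zero]
    · push_neg at hj
      rw [Nat.choose_eq_zero_of_lt hj, Nat.zero_mul]

/-- The inverse binomial transform of the Catalan numbers (the Riordan numbers). -/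
def rb (n : ℕ) : ℤ := ∑ j ∈ range (n+1), (-1)^(n+j) * (n.choose j) * (catalan j)

lemma rb_transform (n : ℕ) :
    ∑ k ∈ range (n+1), (n.choose k : ℤ) * rb k = (catalan n : ℤ) := by
  have ext1 : ∀ k ∈ range (n+1), (n.choose k : ℤ) * rb k
      = ∑ j ∈ range (n+1), (-1)^(k+j) * (n.choose k : ℤ) * (k.choose j) * (catalan j) := by
    intro k hk
    simp only [Finset.mem_range] at hk
    rw [rb, Finset.mul_sum]
    rw [Finset.sum_subset (Finset.range_subset_range.2 (by omega : k+1 ≤ n+1))]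
    · exact Finset.sum_congr rfl fun j _ => by ring
    · intro j _ hj
      simp only [Finset.mem_range, not_lt] at hj
      rw [Nat.choose_eq_zero_of_lt (by omega : k < j)]
      push_cast
      ring
  rw [Finset.sum_congr rfl ext1, Finset.sum_comm]
  have inner : ∀ j ∈ range (n+1),
      (∑ k ∈ range (n+1), (-1)^(k+j) * (n.choose k : ℤ) * (k.choose j) * (catalan j))
      = (if j = n then (catalan n : ℤ) else 0) := by
    intro j hj
    simp only [Finset.mem_range] at hj
    have hjn : j ≤ n := by omega
    rw [show (range (n+1) : Finset ℕ) = Finset.Ico 0 (n+1) by rw [Finset.range_eq_Ico]]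
    rw [← Finset.sum_Ico_consecutive _ (Nat.zero_le j) (by omega : j ≤ n+1)]
    have left0 : ∑ k ∈ Finset.Ico 0 j,
        (-1)^(k+j) * (n.choose k : ℤ) * (k.choose j) * (catalan j) = 0 := by
      apply Finset.sum_eq_zero
      intro k hk
      simp only [Finset.mem_Ico] at hk
      rw [Nat.choose_eq_zero_of_lt (by omega : k < j)]
      push_cast; ring
    rw [left0, zero_add]
    rw [Finset.sum_Ico_eq_sum_range]
    have e1 : n + 1 - j = (n - j) + 1 := by omega
    rw [e1]
    have term : ∀ i ∈ range ((n-j)+1),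
        (-1:ℤ)^(j+i+j) * (n.choose (j+i) : ℤ) * ((j+i).choose j) * (catalan j)
        = (n.choose j : ℤ) * (catalan j) * ((-1)^i * ((n-j).choose i)) := by
      intro i _
      have tr := choose_trin n j i
      have trZ : (n.choose (j+i) : ℤ) * ((j+i).choose j : ℤ)
          = (n.choose j : ℤ) * ((n-j).choose i : ℤ) := by
        exact_mod_cast congrArg (fun x : ℕ => (x:ℤ)) tr
      have sgn : (-1:ℤ)^(j+i+j) = (-1)^i := by
        rw [show j+i+j = i + 2*j by ring, pow_add, pow_mul, neg_one_sq, one_pow, mul_one]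
      rw [sgn]
      linear_combination (catalan j : ℤ) * (-1:ℤ)^i * trZ
    rw [Finset.sum_congr rfl term, ← Finset.mul_sum, Int.alternating_sum_range_choose]
    by_cases hjn' : j = n
    · subst hjn'
      simp
    · have : n - j ≠ 0 := by omega
      rw [if_neg this, if_neg hjn']
      ring
  rw [Finset.sum_congr rfl inner, Finset.sum_ite_eq' (range (n+1)) n]
  simp

/-! ### The holonomic recurrence for `rb` -/

lemma absorbZ (m k : ℕ) :
    ((m+1).choose k : ℤ) * ((m:ℤ) + 1 - k) = ((m:ℤ)+1) * (m.choose k : ℤ) := by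
  by_cases h : k ≤ m + 1
  · have := Nat.choose_mul_succ_eq m k
    have hz : (m.choose k : ℤ) * ((m:ℤ)+1) = ((m+1).choose k : ℤ) * (((m+1-k : ℕ) : ℤ)) := by
      exact_mod_cast congrArg (fun x : ℕ => (x:ℤ)) this
    have hc : ((m+1-k : ℕ) : ℤ) = (m:ℤ) + 1 - k := by omega
    rw [hc] at hz
    linarith
  · push_neg at h
    rw [Nat.choose_eq_zero_of_lt (by omega : m+1 < k), Nat.choose_eq_zero_of_lt (by omega : m < k)]
    push_cast
    ring

lemma catalan_stepZ (k : ℕ) :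
    ((k:ℤ)+2) * (catalan (k+1) : ℤ) = (4*(k:ℤ)+2) * (catalan k : ℤ) := by
  have h1 := succ_mul_catalan_eq_centralBinom (k+1)
  have h2 := Nat.succ_mul_centralBinom_succ k
  have h3 := succ_mul_catalan_eq_centralBinom k
  have h1Z : ((k:ℤ)+2) * (catalan (k+1) : ℤ) = ((k+1).centralBinom : ℤ) := by exact_mod_cast h1
  have h2Z : ((k:ℤ)+1) * ((k+1).centralBinom : ℤ) = 2*(2*(k:ℤ)+1) * (k.centralBinom : ℤ) := by
    exact_mod_cast h2
  have h3Z : ((k:ℤ)+1) * (catalan k : ℤ) = (k.centralBinom : ℤ) := by exact_mod_cast h3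
  have hne : ((k:ℤ)+1) ≠ 0 := by positivity
  apply mul_left_cancel₀ hne
  linear_combination ((k:ℤ)+1) * h1Z + h2Z - (4*(k:ℤ)+2) * h3Z

lemma keyZ (m k : ℕ) :
    (catalan k : ℤ) * ((4*(m:ℤ)+6) * ((m+1).choose k) - (4*(m:ℤ)+4) * (m.choose k))
    = (catalan (k+1) : ℤ) * (((m:ℤ)+3) * ((m+2).choose (k+1))
        - (2*(m:ℤ)+4) * ((m+1).choose (k+1)) + ((m:ℤ)+1) * (m.choose (k+1))) := by
  have p1 : ((m+2).choose (k+1) : ℤ) = ((m+1).choose k : ℤ) + ((m+1).choose (k+1) : ℤ) := by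
    exact_mod_cast congrArg (fun x : ℕ => (x:ℤ)) (Nat.choose_succ_succ' (m+1) k)
  have p2 : ((m+1).choose (k+1) : ℤ) = (m.choose k : ℤ) + (m.choose (k+1) : ℤ) := by
    exact_mod_cast congrArg (fun x : ℕ => (x:ℤ)) (Nat.choose_succ_succ' m k)
  have bracket : ((m:ℤ)+3) * ((m+2).choose (k+1))
      - (2*(m:ℤ)+4) * ((m+1).choose (k+1)) + ((m:ℤ)+1) * (m.choose (k+1))
      = ((m:ℤ)+3) * ((m+1).choose k) - ((m:ℤ)+1) * (m.choose k) := by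
    rw [p1, p2]; ring
  rw [bracket]
  have hne : ((k:ℤ)+2) ≠ 0 := by positivity
  apply mul_left_cancel₀ hne
  have cs := catalan_stepZ k
  have ab := absorbZ m k
  linear_combination (-(((m:ℤ)+3) * ((m+1).choose k) - ((m:ℤ)+1) * (m.choose k))) * cs
    + 6 * (catalan k : ℤ) * ab

lemma rb_rec (m : ℕ) :
    ((m:ℤ)+3) * rb (m+2) = ((m:ℤ)+1) * (2 * rb (m+1) + 3 * rb m) := by
  set S2 := ∑ k ∈ range (m+3), (-1:ℤ)^(m+k) * ((m+2).choose k) * (catalan k) with hS2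
  set S1 := ∑ k ∈ range (m+3), (-1:ℤ)^(m+k) * ((m+1).choose k) * (catalan k) with hS1
  set S0 := ∑ k ∈ range (m+3), (-1:ℤ)^(m+k) * (m.choose k) * (catalan k) with hS0
  have B2 : rb (m+2) = S2 := by
    rw [rb, hS2, show m+2+1 = m+3 by omega]
    refine Finset.sum_congr rfl fun j _ => ?_
    rw [show m+2+j = (m+j)+2 by omega, pow_add, neg_one_sq, mul_one]
  have B1 : rb (m+1) = -S1 := by
    rw [rb, hS1, show m+1+1 = m+2 by omega,
      Finset.sum_range_succ (fun k => (-1:ℤ)^(m+k) * ((m+1).choose k) * (catalan k)) (m+2),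
      Nat.choose_eq_zero_of_lt (by omega : m+1 < m+2)]
    have hcg : ∀ j ∈ range (m+2), (-1:ℤ)^(m+1+j) * ((m+1).choose j) * (catalan j)
        = -((-1:ℤ)^(m+j) * ((m+1).choose j) * (catalan j)) := by
      intro j _
      rw [show m+1+j = (m+j)+1 by omega, pow_succ]
      ring
    rw [Finset.sum_congr rfl hcg]
    push_cast
    rw [Finset.sum_neg_distrib]
    ring
  have B0 : rb m = S0 := by
    rw [rb, hS0,
      Finset.sum_range_succ (fun k => (-1:ℤ)^(m+k) * (m.choose k) * (catalan k)) (m+2),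
      Finset.sum_range_succ (fun k => (-1:ℤ)^(m+k) * (m.choose k) * (catalan k)) (m+1),
      Nat.choose_eq_zero_of_lt (by omega : m < m+2),
      Nat.choose_eq_zero_of_lt (by omega : m < m+1)]
    push_cast
    ring
  have combo : (((m:ℤ)+3) * S2 + (2*(m:ℤ)+2) * S1 - (3*(m:ℤ)+3) * S0)
      = ∑ k ∈ range (m+3), ((-1:ℤ)^(m+k) * (catalan k) *
          (((m:ℤ)+3) * ((m+2).choose k) + (2*(m:ℤ)+2) * ((m+1).choose k)
            - (3*(m:ℤ)+3) * (m.choose k))) := by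
    rw [hS2, hS1, hS0, Finset.mul_sum, Finset.mul_sum, Finset.mul_sum,
      ← Finset.sum_add_distrib, ← Finset.sum_sub_distrib]
    exact Finset.sum_congr rfl fun k _ => by ring
  set F : ℕ → ℤ := fun k => (-1)^(m+k) * (catalan k) *
      (-(((m:ℤ)+3) * ((m+2).choose k)) + (2*(m:ℤ)+4) * ((m+1).choose k)
        - ((m:ℤ)+1) * (m.choose k)) with hF
  have tele : ∀ k ∈ range (m+3), (-1:ℤ)^(m+k) * (catalan k) *
      (((m:ℤ)+3) * ((m+2).choose k) + (2*(m:ℤ)+2) * ((m+1).choose k)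
        - (3*(m:ℤ)+3) * (m.choose k)) = F (k+1) - F k := by
    intro k _
    simp only [hF]
    have hs : (-1:ℤ)^(m+(k+1)) = -(-1:ℤ)^(m+k) := by
      rw [show m+(k+1) = (m+k)+1 by omega, pow_succ]; ring
    rw [hs]
    linear_combination ((-1:ℤ)^(m+k)) * keyZ m k
  have sumtele : ∑ k ∈ range (m+3), (F (k+1) - F k) = F (m+3) - F 0 :=
    Finset.sum_range_sub F (m+3)
  have F0 : F 0 = 0 := by
    simp only [hF]
    simp [Nat.choose_zero_right]
    ring
  have Fend : F (m+3) = 0 := by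
    simp only [hF]
    rw [Nat.choose_eq_zero_of_lt (by omega : m+2 < m+3),
      Nat.choose_eq_zero_of_lt (by omega : m+1 < m+3),
      Nat.choose_eq_zero_of_lt (by omega : m < m+3)]
    push_cast
    ring
  have final : ((m:ℤ)+3) * rb (m+2) - ((m:ℤ)+1) * (2 * rb (m+1) + 3 * rb m) = 0 := by
    rw [B2, B1, B0]
    calc ((m:ℤ)+3) * S2 - ((m:ℤ)+1) * (2 * -S1 + 3 * S0)
        = ((m:ℤ)+3) * S2 + (2*(m:ℤ)+2) * S1 - (3*(m:ℤ)+3) * S0 := by ring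
      _ = ∑ k ∈ range (m+3), ((-1:ℤ)^(m+k) * (catalan k) *
          (((m:ℤ)+3) * ((m+2).choose k) + (2*(m:ℤ)+2) * ((m+1).choose k)
            - (3*(m:ℤ)+3) * (m.choose k))) := combo
      _ = ∑ k ∈ range (m+3), (F (k+1) - F k) := Finset.sum_congr rfl tele
      _ = F (m+3) - F 0 := sumtele
      _ = 0 := by rw [F0, Fend]; ring
  linarith

/-! ### Putting it together -/

lemma transformZ (n : ℕ) :
    ∑ k ∈ range (n+1), (n.choose k : ℤ) * (deutschCount k) = (catalan n : ℤ) := by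
  have h1 := GG_eq_sum n 0
  rw [GG_catalan n] at h1
  have h2 : ∑ k ∈ range (n+1), n.choose k * deutschCount k = catalan n := by
    have e : ∀ k ∈ range (n+1), n.choose k * deutschCount k = n.choose k * dg k 0 :=
      fun k _ => by rw [deutschCount_eq_dg k]
    rw [Finset.sum_congr rfl e]
    exact h1.symm
  exact_mod_cast h2

lemma deutschCount_eq_rb : ∀ n, (deutschCount n : ℤ) = rb n := by
  intro n
  induction n using Nat.strong_induction_on with
  | _ n ih =>
    have h1 := transformZ n
    have h2 := rb_transform n
    rw [Finset.sum_range_succ] at h1 h2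
    have hpre : ∑ k ∈ range n, (n.choose k : ℤ) * (deutschCount k)
        = ∑ k ∈ range n, (n.choose k : ℤ) * rb k := by
      refine Finset.sum_congr rfl fun k hk => ?_
      rw [ih k (Finset.mem_range.mp hk)]
    rw [Nat.choose_self] at h1 h2
    push_cast at h1 h2
    linarith [hpre]

lemma deutsch_rec (m : ℕ) :
    (m+3) * deutschCount (m+2) = (m+1) * (2 * deutschCount (m+1) + 3 * deutschCount m) := by
  have := rb_rec m
  rw [← deutschCount_eq_rb, ← deutschCount_eq_rb, ← deutschCount_eq_rb] at this
  exact_mod_cast this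

lemma deutschCount_zero : deutschCount 0 = 1 := by
  rw [deutschCount_eq_dg]; rfl

lemma deutschCount_one : deutschCount 1 = 0 := by
  rw [deutschCount_eq_dg]
  show dg 0 1 + ∑ j ∈ Finset.range 0, dg 0 j = 0
  simp [dg]

/-- The number of closed Deutsch paths of length `n` is the `n`-th Riordan number
(A005043): in particular the counts for `n = 0,…,7` are `1,0,1,1,3,6,15,36`. -/
theorem deutsch_eq_riordan :
    (∀ R : ℕ → ℕ, R 0 = 1 → R 1 = 0 →
      (∀ n, 2 ≤ n → (n + 1) * R n = (n - 1) * (2 * R (n - 1) + 3 * R (n - 2))) →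
      ∀ n, deutschCount n = R n) ∧
    deutschCount 0 = 1 ∧ deutschCount 1 = 0 ∧ deutschCount 2 = 1 ∧
    deutschCount 3 = 1 ∧ deutschCount 4 = 3 ∧ deutschCount 5 = 6 ∧
    deutschCount 6 = 15 ∧ deutschCount 7 = 36 := by
  have d0 := deutschCount_zero
  have d1 := deutschCount_one
  have r0 := deutsch_rec 0
  have r1 := deutsch_rec 1
  have r2 := deutsch_rec 2
  have r3 := deutsch_rec 3
  have r4 := deutsch_rec 4
  have r5 := deutsch_rec 5
  constructor
  · intro R hR0 hR1 hRrec
    intro n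
    induction n using Nat.strong_induction_on with
    | _ n ih =>
      match n with
      | 0 => rw [d0, hR0]
      | 1 => rw [d1, hR1]
      | (m+2) =>
        have hR := hRrec (m+2) (by omega)
        have e1 : m+2-1 = m+1 := by omega
        have e2 : m+2-2 = m := by omega
        rw [e1, e2] at hR
        have hd := deutsch_rec m
        rw [ih (m+1) (by omega), ih m (by omega)] at hd
        have : (m+3) * deutschCount (m+2) = (m+3) * R (m+2) := by
          rw [hd]
          rw [show m+2+1 = m+3 by omega] at hR
          omega
        exact Nat.eq_of_mul_eq_mul_left (by omega) this
  · norm_num at r0 r1 r2 r3 r4 r5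
    omega
end

section
/- The generating function Φ(z) = (1 + z - √(1 - 2z - 3z²))/(2z(1+z)) of closed Deutsch paths satisfies, under the substitution z = v/(1+v+v²), the identity Φ = (1+v+v²)/(1+v). -/
/-- Under `z = v/(1+v+v²)`, the generating function of closed Deutsch paths
simplifies to `(1+v+v²)/(1+v)`. -/
theorem deutsch_gf_substitution (v z : ℝ) (hv0 : 0 < v) (hv1 : v < 1)
    (hz : z = v / (1 + v + v ^ 2)) :
    (1 + z - Real.sqrt (1 - 2 * z - 3 * z ^ 2)) / (2 * z * (1 + z))
      = (1 + v + v ^ 2) / (1 + v) := by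
  have hD : (0:ℝ) < 1 + v + v ^ 2 := by positivity
  have hDne : (1 + v + v ^ 2 : ℝ) ≠ 0 := ne_of_gt hD
  have hsq : 1 - 2 * z - 3 * z ^ 2 = ((1 - v ^ 2) / (1 + v + v ^ 2)) ^ 2 := by
    subst hz; field_simp; ring
  have hnn : (0:ℝ) ≤ (1 - v ^ 2) / (1 + v + v ^ 2) := by
    apply div_nonneg _ hD.le
    nlinarith
  rw [hsq, Real.sqrt_sq hnn]
  have hz0 : z ≠ 0 := by
    rw [hz]; positivity
  have h1z : 1 + z > 0 := by
    rw [hz]; positivity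
  subst hz
  rw [div_eq_div_iff (by positivity) (by positivity)]
  field_simp
  ring
end

section
/- The number of open Deutsch paths of length n (paths that may end at any nonnegative level) equals the n-th Motzkin number. -/
/-- A Motzkin path: steps `+1, 0, -1`, partial sums nonnegative. -/
def IsMotzkinPath (l : List ℤ) : Prop :=
  (∀ s ∈ l, s = 1 ∨ s = 0 ∨ s = -1) ∧ ∀ n : ℕ, 0 ≤ (l.take n).sum

open Finset

/-- Count of Deutsch paths of length `n` starting at height `h`. -/
def dd : ℕ → ℕ → ℕ
  | 0, _ => 1
  | n+1, h => dd n (h+1) + ∑ j ∈ Finset.range h, dd n j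

/-- Count of Motzkin paths of length `n` from height `h` down to `0`. -/
def mo : ℕ → ℕ → ℕ
  | 0, 0 => 1
  | 0, _+1 => 0
  | n+1, 0 => mo n 1 + mo n 0
  | n+1, h+1 => mo n (h+2) + mo n (h+1) + mo n h

lemma mo_zero (k : ℕ) : mo 0 k = if k = 0 then 1 else 0 := by
  cases k <;> rfl

lemma mo_succ (n k : ℕ) :
    mo (n+1) k = mo n (k+1) + mo n k + (if k = 0 then 0 else mo n (k-1)) := by
  cases k <;> simp [mo]

/-- Deutsch paths of length `n` starting from height `h`. -/
abbrev SD (h n : ℕ) : Type :=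
  {l : List ℤ // (∀ s ∈ l, s = 1 ∨ s ≤ -1) ∧
    (∀ k : ℕ, 0 ≤ (h : ℤ) + (l.take k).sum) ∧ l.length = n}

/-- Motzkin paths of length `n` from height `h` to `0`. -/
abbrev SM (h n : ℕ) : Type :=
  {l : List ℤ // (∀ s ∈ l, s = 1 ∨ s = 0 ∨ s = -1) ∧
    (∀ k : ℕ, 0 ≤ (h : ℤ) + (l.take k).sum) ∧ l.length = n ∧ (h : ℤ) + l.sum = 0}

lemma prefix_iff (h s : ℤ) (t : List ℤ) :
    (∀ k : ℕ, 0 ≤ h + (((s :: t)).take k).sum) ↔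
      (0 ≤ h ∧ ∀ k : ℕ, 0 ≤ (h + s) + (t.take k).sum) := by
  constructor
  · intro H
    refine ⟨by simpa using H 0, fun k => ?_⟩
    have := H (k+1)
    simpa [List.take_succ_cons, add_assoc] using this
  · rintro ⟨h0, H⟩ k
    cases k with
    | zero => simpa using h0
    | succ k =>
      have := H k
      simpa [List.take_succ_cons, add_assoc] using this

/-- First-step decomposition map for Deutsch paths. -/
def FD (h n : ℕ) : (SD (h+1) n ⊕ Σ k : Fin h, SD k n) → SD h (n+1)
  | .inl ⟨t, ht1, ht2, ht3⟩ =>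
    ⟨1 :: t, by
      intro s hs
      rcases List.mem_cons.mp hs with rfl | hs
      · exact Or.inl rfl
      · exact ht1 s hs, by
      refine (prefix_iff _ _ _).mpr ⟨Int.natCast_nonneg h, fun k => ?_⟩
      have := ht2 k
      push_cast at this ⊢
      linarith, by simp [ht3]⟩
  | .inr ⟨⟨k, hk⟩, t, ht1, ht2, ht3⟩ =>
    ⟨((k : ℤ) - h) :: t, by
      intro s hs
      rcases List.mem_cons.mp hs with rfl | hs
      · exact Or.inr (by omega)
      · exact ht1 s hs, by
      refine (prefix_iff _ _ _).mpr ⟨Int.natCast_nonneg h, fun m => ?_⟩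
      have := ht2 m
      push_cast at this ⊢
      linarith, by simp [ht3]⟩

lemma FD_bij (h n : ℕ) : Function.Bijective (FD h n) := by
  constructor
  · rintro (⟨t, ht1, ht2, ht3⟩ | ⟨⟨k, hk⟩, t, ht1, ht2, ht3⟩)
      (⟨u, hu1, hu2, hu3⟩ | ⟨⟨k', hk'⟩, u, hu1, hu2, hu3⟩) heq <;>
      have hv := congrArg Subtype.val heq <;>
      simp only [FD, List.cons.injEq] at hv
    · obtain rfl : t = u := by tauto
      rfl
    · exact absurd hv.1 (by omega)
    · exact absurd hv.1 (by omega)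
    · obtain ⟨h1, rfl⟩ := hv
      obtain rfl : k = k' := by omega
      rfl
  · rintro ⟨l, hl1, hl2, hl3⟩
    cases l with
    | nil => simp at hl3
    | cons s t =>
      have hmem := hl1 s List.mem_cons_self
      have hpre := (prefix_iff _ _ _).mp hl2
      rcases hmem with rfl | hs
      · refine ⟨.inl ⟨t, fun x hx => hl1 x (List.mem_cons_of_mem _ hx), ?_, by simpa using hl3⟩, ?_⟩
        · intro k
          have := hpre.2 k
          push_cast
          linarith
        · apply Subtype.ext; rfl
      · have h0 : 0 ≤ (h : ℤ) + s := by simpa using hpre.2 0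
        set k : ℕ := ((h : ℤ) + s).toNat with hkdef
        have hk : (k : ℤ) = (h : ℤ) + s := Int.toNat_of_nonneg h0
        have hkh : k < h := by omega
        refine ⟨.inr ⟨⟨k, hkh⟩, t, fun x hx => hl1 x (List.mem_cons_of_mem _ hx), ?_, by simpa using hl3⟩, ?_⟩
        · intro m
          have := hpre.2 m
          rw [hk]
          linarith
        · apply Subtype.ext
          show ((k : ℤ) - h) :: t = s :: t
          congr 1
          omega

lemma SD_card : ∀ n h, Finite (SD h n) ∧ Nat.card (SD h n) = dd n h := by
  intro n
  induction n with
  | zero =>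
    intro h
    have hne : Nonempty (SD h 0) :=
      ⟨⟨[], by simp, fun k => by simpa using Int.natCast_nonneg h, rfl⟩⟩
    have hss : Subsingleton (SD h 0) := by
      constructor
      rintro ⟨l, _, _, hl⟩ ⟨l', _, _, hl'⟩
      apply Subtype.ext
      show l = l'
      rw [List.length_eq_zero_iff.mp hl, List.length_eq_zero_iff.mp hl']
    haveI := hne; haveI := hss
    exact ⟨Finite.of_subsingleton, Nat.card_unique⟩
  | succ n IH =>
    intro h
    haveI f1 : Finite (SD (h+1) n) := (IH (h+1)).1
    haveI f2 : ∀ k : Fin h, Finite (SD k n) := fun k => (IH k).1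
    haveI : Finite (SD (h+1) n ⊕ Σ k : Fin h, SD k n) := by infer_instance
    have hbij := FD_bij h n
    have hfin : Finite (SD h (n+1)) := Finite.of_surjective _ hbij.2
    refine ⟨hfin, ?_⟩
    rw [← Nat.card_eq_of_bijective _ hbij, Nat.card_sum]
    haveI : ∀ k : Fin h, Fintype (SD k n) := fun k => Fintype.ofFinite _
    have hsig : Nat.card (Σ k : Fin h, SD k n) = ∑ j ∈ range h, dd n j := by
      rw [Nat.card_eq_fintype_card, Fintype.card_sigma]
      rw [← Fin.sum_univ_eq_sum_range (fun j => dd n j) h]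
      exact Finset.sum_congr rfl fun k _ => by
        rw [← Nat.card_eq_fintype_card, (IH k).2]
    rw [hsig, (IH (h+1)).2]
    rfl

/-- First-step decomposition map for Motzkin paths from height `0`. -/
def FM0 (n : ℕ) : (SM 1 n ⊕ SM 0 n) → SM 0 (n+1)
  | .inl ⟨t, ht1, ht2, ht3, ht4⟩ =>
    ⟨1 :: t, by
      intro s hs
      rcases List.mem_cons.mp hs with rfl | hs
      · exact Or.inl rfl
      · exact ht1 s hs, by
      refine (prefix_iff _ _ _).mpr ⟨le_refl 0, fun k => ?_⟩
      have := ht2 k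
      push_cast at this ⊢
      linarith, by simp [ht3], by
      have h4 := ht4
      push_cast at h4
      simp only [List.sum_cons]
      push_cast
      linarith⟩
  | .inr ⟨t, ht1, ht2, ht3, ht4⟩ =>
    ⟨0 :: t, by
      intro s hs
      rcases List.mem_cons.mp hs with rfl | hs
      · exact Or.inr (Or.inl rfl)
      · exact ht1 s hs, by
      refine (prefix_iff _ _ _).mpr ⟨le_refl 0, fun k => ?_⟩
      have := ht2 k
      push_cast at this ⊢
      linarith, by simp [ht3], by
      have h4 := ht4
      push_cast at h4
      simp only [List.sum_cons]
      push_cast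
      linarith⟩

/-- First-step decomposition map for Motzkin paths from height `h+1`. -/
def FMS (h n : ℕ) : (SM (h+2) n ⊕ SM (h+1) n ⊕ SM h n) → SM (h+1) (n+1)
  | .inl ⟨t, ht1, ht2, ht3, ht4⟩ =>
    ⟨1 :: t, by
      intro s hs
      rcases List.mem_cons.mp hs with rfl | hs
      · exact Or.inl rfl
      · exact ht1 s hs, by
      refine (prefix_iff _ _ _).mpr ⟨Int.natCast_nonneg _, fun k => ?_⟩
      have := ht2 k
      push_cast at this ⊢
      linarith, by simp [ht3], by
      have h4 := ht4
      push_cast at h4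
      simp only [List.sum_cons]
      push_cast
      linarith⟩
  | .inr (.inl ⟨t, ht1, ht2, ht3, ht4⟩) =>
    ⟨0 :: t, by
      intro s hs
      rcases List.mem_cons.mp hs with rfl | hs
      · exact Or.inr (Or.inl rfl)
      · exact ht1 s hs, by
      refine (prefix_iff _ _ _).mpr ⟨Int.natCast_nonneg _, fun k => ?_⟩
      have := ht2 k
      push_cast at this ⊢
      linarith, by simp [ht3], by
      have h4 := ht4
      push_cast at h4
      simp only [List.sum_cons]
      push_cast
      linarith⟩
  | .inr (.inr ⟨t, ht1, ht2, ht3, ht4⟩) =>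
    ⟨(-1) :: t, by
      intro s hs
      rcases List.mem_cons.mp hs with rfl | hs
      · exact Or.inr (Or.inr rfl)
      · exact ht1 s hs, by
      refine (prefix_iff _ _ _).mpr ⟨Int.natCast_nonneg _, fun k => ?_⟩
      have := ht2 k
      push_cast at this ⊢
      linarith, by simp [ht3], by
      have h4 := ht4
      push_cast at h4
      simp only [List.sum_cons]
      push_cast
      linarith⟩

lemma FM0_bij (n : ℕ) : Function.Bijective (FM0 n) := by
  constructor
  · rintro (⟨t, ht⟩ | ⟨t, ht⟩) (⟨u, hu⟩ | ⟨u, hu⟩) heq <;>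
      have hv := congrArg Subtype.val heq <;>
      obtain ⟨ht1, ht2, ht3, ht4⟩ := ht <;>
      obtain ⟨hu1, hu2, hu3, hu4⟩ := hu <;>
      simp only [FM0, List.cons.injEq] at hv <;>
      first
      | (obtain ⟨-, rfl⟩ := hv; rfl)
      | (obtain rfl := hv; rfl)
      | exact absurd hv.1 (by norm_num)
  · rintro ⟨l, hl1, hl2, hl3, hl4⟩
    cases l with
    | nil => simp at hl3
    | cons s t =>
      have hmem := hl1 s List.mem_cons_self
      have hpre := (prefix_iff _ _ _).mp hl2
      have hs0 : 0 ≤ (0 : ℤ) + s := by simpa using hpre.2 0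
      have hsum : s + t.sum = 0 := by
        have := hl4
        simp only [List.sum_cons] at this
        push_cast at this
        linarith
      rcases hmem with rfl | rfl | rfl
      · refine ⟨.inl ⟨t, fun x hx => hl1 x (List.mem_cons_of_mem _ hx), ?_, by simpa using hl3, ?_⟩, ?_⟩
        · intro k; have := hpre.2 k; push_cast at this ⊢; linarith
        · push_cast; linarith
        · apply Subtype.ext; rfl
      · refine ⟨.inr ⟨t, fun x hx => hl1 x (List.mem_cons_of_mem _ hx), ?_, by simpa using hl3, ?_⟩, ?_⟩
        · intro k; have := hpre.2 k; push_cast at this ⊢; linarith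
        · push_cast; linarith
        · apply Subtype.ext; rfl
      · exfalso; norm_num at hs0

lemma FMS_bij (h n : ℕ) : Function.Bijective (FMS h n) := by
  constructor
  · rintro (⟨t, ht⟩ | ⟨t, ht⟩ | ⟨t, ht⟩) (⟨u, hu⟩ | ⟨u, hu⟩ | ⟨u, hu⟩) heq <;>
      have hv := congrArg Subtype.val heq <;>
      obtain ⟨ht1, ht2, ht3, ht4⟩ := ht <;>
      obtain ⟨hu1, hu2, hu3, hu4⟩ := hu <;>
      simp only [FMS, List.cons.injEq] at hv <;>
      first
      | (obtain ⟨-, rfl⟩ := hv; rfl)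
      | (obtain rfl := hv; rfl)
      | exact absurd hv.1 (by norm_num)
  · rintro ⟨l, hl1, hl2, hl3, hl4⟩
    cases l with
    | nil => simp at hl3
    | cons s t =>
      have hmem := hl1 s List.mem_cons_self
      have hpre := (prefix_iff _ _ _).mp hl2
      have hsum : ((h : ℤ) + 1) + (s + t.sum) = 0 := by
        have := hl4
        simp only [List.sum_cons] at this
        push_cast at this
        linarith
      rcases hmem with rfl | rfl | rfl
      · refine ⟨.inl ⟨t, fun x hx => hl1 x (List.mem_cons_of_mem _ hx), ?_, by simpa using hl3, ?_⟩, ?_⟩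
        · intro k; have := hpre.2 k; push_cast at this ⊢; linarith
        · push_cast; linarith
        · apply Subtype.ext; rfl
      · refine ⟨.inr (.inl ⟨t, fun x hx => hl1 x (List.mem_cons_of_mem _ hx), ?_, by simpa using hl3, ?_⟩), ?_⟩
        · intro k; have := hpre.2 k; push_cast at this ⊢; linarith
        · push_cast; linarith
        · apply Subtype.ext; rfl
      · refine ⟨.inr (.inr ⟨t, fun x hx => hl1 x (List.mem_cons_of_mem _ hx), ?_, by simpa using hl3, ?_⟩), ?_⟩
        · intro k; have := hpre.2 k; push_cast at this ⊢; linarith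
        · push_cast; linarith
        · apply Subtype.ext; rfl

lemma SM_card : ∀ n h, Finite (SM h n) ∧ Nat.card (SM h n) = mo n h := by
  intro n
  induction n with
  | zero =>
    intro h
    cases h with
    | zero =>
      have hne : Nonempty (SM 0 0) :=
        ⟨⟨[], by simp, fun k => by simp, rfl, by simp⟩⟩
      have hss : Subsingleton (SM 0 0) := by
        constructor
        rintro ⟨l, _, _, hl, _⟩ ⟨l', _, _, hl', _⟩
        apply Subtype.ext
        show l = l'
        rw [List.length_eq_zero_iff.mp hl, List.length_eq_zero_iff.mp hl']
      haveI := hne; haveI := hss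
      exact ⟨Finite.of_subsingleton, Nat.card_unique⟩
    | succ h =>
      have he : IsEmpty (SM (h+1) 0) := by
        constructor
        rintro ⟨l, _, _, hl, hsum⟩
        rw [List.length_eq_zero_iff.mp hl] at hsum
        simp only [List.sum_nil, add_zero] at hsum
        omega
      haveI := he
      refine ⟨Finite.of_subsingleton, ?_⟩
      rw [Nat.card_of_isEmpty]
      rfl
  | succ n IH =>
    intro h
    cases h with
    | zero =>
      haveI : Finite (SM 1 n) := (IH 1).1
      haveI : Finite (SM 0 n) := (IH 0).1
      have hbij := FM0_bij n
      refine ⟨Finite.of_surjective _ hbij.2, ?_⟩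
      rw [← Nat.card_eq_of_bijective _ hbij, Nat.card_sum, (IH 1).2, (IH 0).2]
      rfl
    | succ h =>
      haveI : Finite (SM (h+2) n) := (IH (h+2)).1
      haveI : Finite (SM (h+1) n) := (IH (h+1)).1
      haveI : Finite (SM h n) := (IH h).1
      have hbij := FMS_bij h n
      refine ⟨Finite.of_surjective _ hbij.2, ?_⟩
      rw [← Nat.card_eq_of_bijective _ hbij, Nat.card_sum, Nat.card_sum,
        (IH (h+2)).2, (IH (h+1)).2, (IH h).2]
      rw [show mo (n+1) (h+1) = mo n (h+2) + mo n (h+1) + mo n h from rfl]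
      ring

lemma sum_dd (n : ℕ) (IH : ∀ g, dd n g = ∑ k ∈ range (g+1), g.choose k * mo n k) :
    ∀ h, ∑ j ∈ range h, dd n j = ∑ k ∈ range h, h.choose (k+1) * mo n k := by
  intro h
  induction h with
  | zero => simp
  | succ h ih =>
    rw [Finset.sum_range_succ, ih, IH h]
    have hext : (∑ k ∈ range h, h.choose (k+1) * mo n k)
        = ∑ k ∈ range (h+1), h.choose (k+1) * mo n k := by
      rw [Finset.sum_range_succ, Nat.choose_succ_self, zero_mul, add_zero]
    rw [hext, ← Finset.sum_add_distrib]
    exact Finset.sum_congr rfl fun k _ => by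
      rw [Nat.choose_succ_succ]; ring

lemma key : ∀ n h, dd n h = ∑ k ∈ range (h+1), h.choose k * mo n k := by
  intro n
  induction n with
  | zero =>
    intro h
    show 1 = _
    rw [Finset.sum_congr rfl (fun k (_ : k ∈ range (h+1)) => by rw [mo_zero])]
    simp [mul_ite, Finset.sum_ite_eq']
  | succ n IH =>
    intro h
    have hA : dd n (h+1) = (∑ k ∈ range (h+1), h.choose k * mo n (k+1))
        + ∑ k ∈ range (h+1), h.choose k * mo n k := by
      rw [IH (h+1), Finset.sum_range_succ' (fun k => (h+1).choose k * mo n k) (h+1)]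
      rw [Finset.sum_congr rfl (fun i (_ : i ∈ range (h+1)) => by
        rw [show ((h+1).choose (i+1) * mo n (i+1) : ℕ)
            = h.choose i * mo n (i+1) + h.choose (i+1) * mo n (i+1) from by
          rw [Nat.choose_succ_succ]; ring])]
      rw [Finset.sum_add_distrib]
      rw [Nat.choose_zero_right, one_mul]
      have hB2 : (∑ i ∈ range (h+1), h.choose (i+1) * mo n (i+1)) + mo n 0
          = ∑ k ∈ range (h+1), h.choose k * mo n k := by
        rw [show (mo n 0 : ℕ) = h.choose 0 * mo n 0 from by
          rw [Nat.choose_zero_right, one_mul]]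
        rw [← Finset.sum_range_succ' (fun k => h.choose k * mo n k) (h+1)]
        rw [Finset.sum_range_succ (fun k => h.choose k * mo n k) (h+1)]
        simp [Nat.choose_succ_self]
      rw [add_assoc, hB2]
    have hC := sum_dd n IH h
    have hD : (∑ k ∈ range (h+1), h.choose k * (if k = 0 then 0 else mo n (k-1)))
        = ∑ k ∈ range h, h.choose (k+1) * mo n k := by
      rw [Finset.sum_range_succ' (fun k => h.choose k * (if k = 0 then 0 else mo n (k-1))) h]
      simp
    have hR : (∑ k ∈ range (h+1), h.choose k * mo (n+1) k)
        = ((∑ k ∈ range (h+1), h.choose k * mo n (k+1))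
          + ∑ k ∈ range (h+1), h.choose k * mo n k)
          + ∑ k ∈ range h, h.choose (k+1) * mo n k := by
      have hstep : ∀ k ∈ range (h+1), h.choose k * mo (n+1) k
          = h.choose k * mo n (k+1) + (h.choose k * mo n k
            + h.choose k * (if k = 0 then 0 else mo n (k-1))) := by
        intro k _
        rw [mo_succ]; ring
      rw [Finset.sum_congr rfl hstep, Finset.sum_add_distrib, Finset.sum_add_distrib, hD]
      ring
    show dd n (h+1) + ∑ j ∈ range h, dd n j = _
    rw [hA, hC, hR]

/-- Open Deutsch paths of length `n` are counted by the `n`-th Motzkin number. -/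
theorem open_deutsch_eq_motzkin (n : ℕ) :
    Nat.card {l : List ℤ // IsDeutsch l ∧ l.length = n} =
      Nat.card {l : List ℤ // IsMotzkinPath l ∧ l.length = n ∧ l.sum = 0} := by
  have e1 : Nat.card {l : List ℤ // IsDeutsch l ∧ l.length = n} = Nat.card (SD 0 n) := by
    apply Nat.card_congr
    apply Equiv.subtypeEquivRight
    intro l
    unfold IsDeutsch
    constructor
    · rintro ⟨⟨a, b⟩, c⟩; exact ⟨a, by simpa using b, c⟩
    · rintro ⟨a, b, c⟩; exact ⟨⟨a, by simpa using b⟩, c⟩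
  have e2 : Nat.card {l : List ℤ // IsMotzkinPath l ∧ l.length = n ∧ l.sum = 0}
      = Nat.card (SM 0 n) := by
    apply Nat.card_congr
    apply Equiv.subtypeEquivRight
    intro l
    unfold IsMotzkinPath
    constructor
    · rintro ⟨⟨a, b⟩, c, d⟩; exact ⟨a, by simpa using b, c, by simpa using d⟩
    · rintro ⟨a, b, c, d⟩; exact ⟨⟨a, by simpa using b⟩, c, by simpa using d⟩
  rw [e1, e2, (SD_card n 0).2, (SM_card n 0).2]
  have := key n 0
  simpa using this
end

section
/- The number of closed Deutsch paths of length n satisfying the Stanley condition (every maximal down-run returning to the x-axis starts at an odd level), for n = 0 through 10, is 1, 0, 1, 0, 2, 2, 7, 14, 37, 90, 233. -/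
def StanleyCond (l : List ℤ) : Prop :=
  ∀ i j : ℕ, i ≤ j → j < l.length →
    (i = 0 ∨ l.getD (i - 1) 0 = 1) →
    (∀ k, i ≤ k → k ≤ j → l.getD k 0 ≤ -1) →
    (l.take (j + 1)).sum = 0 →
    Odd (l.take i).sum

/-- Number of closed Deutsch paths of length `n` satisfying Stanley's condition. -/
noncomputable def stanleyCount (n : ℕ) : ℕ :=
  Nat.card {l : List ℤ // IsDeutsch l ∧ l.length = n ∧ l.sum = 0 ∧ StanleyCond l}

/-- All allowed steps from height `h` that keep the path nonnegative. -/
def exts (h : ℤ) : List ℤ := 1 :: (List.range h.toNat).map (fun k : ℕ => -((k : ℤ) + 1))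

/-- All Deutsch paths of length `n`. -/
def gen : ℕ → List (List ℤ)
| 0 => [[]]
| n+1 => (gen n).flatMap fun l => (exts l.sum).map fun s => l ++ [s]

/-- Decidable version of Stanley's condition. -/
def stanleyD (l : List ℤ) : Prop :=
  ∀ j < l.length, ∀ i < j + 1,
    ((i = 0 ∨ l.getD (i - 1) 0 = 1) →
    (∀ k < j + 1, i ≤ k → l.getD k 0 ≤ -1) →
    (l.take (j + 1)).sum = 0 →
    (l.take i).sum % 2 = 1)

instance : DecidablePred stanleyD := fun _ => Nat.decidableBallLT _ _

lemma stanley_iff (l : List ℤ) : StanleyCond l ↔ stanleyD l := by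
  constructor
  · intro h j hj i hi h1 h2 h3
    exact Int.odd_iff.mp (h i j (by omega) hj h1 (fun k hik hkj => h2 k (by omega) hik) h3)
  · intro h i j hij hj h1 h2 h3
    exact Int.odd_iff.mpr (h j hj i (by omega) h1 (fun k hk hik => h2 k hik (by omega)) h3)

lemma mem_exts {h : ℤ} (hh : 0 ≤ h) {s : ℤ} : s ∈ exts h ↔ s = 1 ∨ (-h ≤ s ∧ s ≤ -1) := by
  simp only [exts, List.mem_cons, List.mem_map, List.mem_range]
  constructor
  · rintro (rfl | ⟨k, hk, rfl⟩)
    · exact Or.inl rfl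
    · right; omega
  · rintro (rfl | ⟨h1, h2⟩)
    · exact Or.inl rfl
    · exact Or.inr ⟨(-s-1).toNat, by omega, by omega⟩

lemma exts_nodup (h : ℤ) : (exts h).Nodup := by
  rw [exts]
  refine List.Nodup.cons ?_ (List.Nodup.map ?_ List.nodup_range)
  · simp only [List.mem_map, List.mem_range, not_exists]
    intro k
    omega
  · intro a b hab
    simp only at hab
    omega

lemma gen_nodup : ∀ n, (gen n).Nodup
  | 0 => by simp [gen]
  | n+1 => by
    rw [gen, List.nodup_flatMap]
    constructor
    · intro a _
      refine List.Nodup.map ?_ (exts_nodup _)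
      intro s t hst
      simpa using hst
    · refine (gen_nodup n).imp ?_
      intro a b hab
      intro x hx hx'
      simp only [List.mem_map] at hx hx'
      obtain ⟨s, _, rfl⟩ := hx
      obtain ⟨t, _, h⟩ := hx'
      apply hab
      have := congrArg List.dropLast h
      simpa using this.symm

lemma mem_gen : ∀ n (l : List ℤ), l ∈ gen n ↔ (IsDeutsch l ∧ l.length = n)
  | 0, l => by
    constructor
    · intro hl
      simp only [gen, List.mem_singleton] at hl
      subst hl
      exact ⟨⟨by simp, by simp⟩, rfl⟩
    · rintro ⟨_, hlen⟩
      simp [gen, List.eq_nil_of_length_eq_zero hlen]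
  | n+1, l => by
    rw [gen]
    simp only [List.mem_flatMap, List.mem_map]
    constructor
    · rintro ⟨a, ha, s, hs, rfl⟩
      obtain ⟨⟨hmem, hpre⟩, hlen⟩ := (mem_gen n a).mp ha
      have hsum : 0 ≤ a.sum := by have := hpre a.length; rwa [List.take_length] at this
      rw [mem_exts hsum] at hs
      refine ⟨⟨?_, ?_⟩, by simp [hlen]⟩
      · intro x hx
        rcases List.mem_append.mp hx with h | h
        · exact hmem x h
        · simp only [List.mem_singleton] at h
          subst h
          rcases hs with rfl | ⟨_, h2⟩
          · exact Or.inl rfl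
          · exact Or.inr h2
      · intro m
        rw [List.take_append, List.sum_append]
        rcases le_or_gt m a.length with hm | hm
        · rw [show m - a.length = 0 by omega]
          simpa using hpre m
        · rw [List.take_of_length_le (le_of_lt hm),
              List.take_of_length_le (by simp; omega)]
          have := hpre m
          rw [List.take_of_length_le (le_of_lt hm)] at this
          simp only [List.sum_cons, List.sum_nil, add_zero]
          rcases hs with rfl | ⟨hge, _⟩ <;> omega
    · rintro ⟨⟨hmem, hpre⟩, hlen⟩
      rcases List.eq_nil_or_concat l with rfl | ⟨a, s, rfl⟩
      · simp at hlen
      rw [List.concat_eq_append] at hmem hpre hlen ⊢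
      have hlen' : a.length = n := by
        rw [List.length_append, List.length_singleton] at hlen
        omega
      have key : ∀ m, m ≤ a.length → (a ++ [s]).take m = a.take m := by
        intro m hm
        rw [List.take_append, show m - a.length = 0 by omega]
        simp
      have hpre' : ∀ m, 0 ≤ (a.take m).sum := by
        intro m
        rcases le_or_gt m a.length with hm | hm
        · have := hpre m
          rwa [key m hm] at this
        · rw [List.take_of_length_le (le_of_lt hm)]
          have := hpre a.length
          rwa [key a.length le_rfl, List.take_length] at this
      have hd : IsDeutsch a := ⟨fun x hx => hmem x (List.mem_append_left _ hx), hpre'⟩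
      have hsum : 0 ≤ a.sum := by have := hpre' a.length; rwa [List.take_length] at this
      refine ⟨a, (mem_gen n a).mpr ⟨hd, hlen'⟩, s, ?_, rfl⟩
      rw [mem_exts hsum]
      rcases hmem s (List.mem_append_right _ (List.mem_singleton_self s)) with h1 | h1
      · exact Or.inl h1
      · refine Or.inr ⟨?_, h1⟩
        have := hpre (a.length + 1)
        rw [List.take_of_length_le (by simp)] at this
        rw [List.sum_append, List.sum_singleton] at this
        omega

lemma count_eq (n : ℕ) :
    stanleyCount n
      = ((gen n).filter (fun l => decide (l.sum = 0 ∧ stanleyD l))).length := by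
  have hset : {l : List ℤ | IsDeutsch l ∧ l.length = n ∧ l.sum = 0 ∧ StanleyCond l}
      = ↑((gen n).filter (fun l => decide (l.sum = 0 ∧ stanleyD l))).toFinset := by
    ext l
    simp only [Set.mem_setOf_eq, Finset.coe_sort_coe, List.coe_toFinset, Set.mem_setOf_eq,
      List.mem_filter, mem_gen, decide_eq_true_eq, stanley_iff]
    tauto
  have h1 : stanleyCount n
      = Nat.card {l : List ℤ | IsDeutsch l ∧ l.length = n ∧ l.sum = 0 ∧ StanleyCond l} := rfl
  rw [h1, hset, Nat.card_coe_set_eq, Set.ncard_coe_finset,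
    List.toFinset_card_of_nodup ((gen_nodup n).filter _)]

set_option maxRecDepth 100000 in
/-- Counts for `n = 0,…,10` are `1,0,1,0,2,2,7,14,37,90,233`. -/
theorem stanley_counts :
    stanleyCount 0 = 1 ∧ stanleyCount 1 = 0 ∧ stanleyCount 2 = 1 ∧
    stanleyCount 3 = 0 ∧ stanleyCount 4 = 2 ∧ stanleyCount 5 = 2 ∧
    stanleyCount 6 = 7 ∧ stanleyCount 7 = 14 ∧ stanleyCount 8 = 37 ∧
    stanleyCount 9 = 90 ∧ stanleyCount 10 = 233 := by
  refine ⟨?_, ?_, ?_, ?_, ?_, ?_, ?_, ?_, ?_, ?_, ?_⟩ <;>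
    rw [count_eq] <;> decide +kernel
end

section
/- As formal power series (or for 0 < v < 1 with z = v/(1+v+v²)), the generating function of Stanley-condition Deutsch paths satisfies (3 + z - √(1-2z-3z²))/(2(1+z)) = (1 + 2v + 2v²)/(1+v)². -/
/-- The Stanley-condition generating function simplifies under `z = v/(1+v+v²)`. -/
theorem stanley_gf_substitution (v z : ℝ) (hv0 : 0 < v) (hv1 : v < 1)
    (hz : z = v / (1 + v + v ^ 2)) :
    (3 + z - Real.sqrt (1 - 2 * z - 3 * z ^ 2)) / (2 * (1 + z))
      = (1 + 2 * v + 2 * v ^ 2) / (1 + v) ^ 2 := by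
  have hQ : (0:ℝ) < 1 + v + v ^ 2 := by positivity
  have hQ' : (1:ℝ) + v + v ^ 2 ≠ 0 := ne_of_gt hQ
  have h1 : 1 - 2 * z - 3 * z ^ 2 = ((1 - v ^ 2) / (1 + v + v ^ 2)) ^ 2 := by
    subst hz; field_simp; ring
  have hnn : (0:ℝ) ≤ (1 - v ^ 2) / (1 + v + v ^ 2) := by
    apply div_nonneg _ hQ.le; nlinarith
  rw [h1, Real.sqrt_sq hnn]
  subst hz
  have h1v : (1:ℝ) + v ≠ 0 := by positivity
  field_simp
  ring
end

section
/- Under the substitution z = v/(1+v+v²), the generating function of the total number of maximal up-runs of length one over all closed Deutsch paths of length n equals v²/((1-v)(1+v)²(1+v+v²)). -/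
/-- The derivative at `t = 1` of the bivariate generating function `Φ(z,0;t)`
equals `v²/((1-v)(1+v)²(1+v+v²))` under `z = v/(1+v+v²)`. -/
theorem deriv_gf_substitution (v z : ℝ) (hv0 : 0 < v) (hv1 : v < 1)
    (hz : z = v / (1 + v + v ^ 2)) :
    deriv (fun t : ℝ =>
      (-t * z ^ 2 + z + 1 + z ^ 2 -
        Real.sqrt (t ^ 2 * z ^ 4 + 2 * t * z ^ 3 - 2 * t * z ^ 2 + 2 * t * z ^ 4
          - z ^ 2 - 2 * z - 2 * z ^ 3 + 1 - 3 * z ^ 4)) /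
      (2 * z * (1 + z) * (z ^ 2 - t * z ^ 2 + 1))) 1
    = v ^ 2 / ((1 - v) * (1 + v) ^ 2 * (1 + v + v ^ 2)) := by
  have hs : (0:ℝ) < 1 + v + v ^ 2 := by nlinarith
  have hz0 : 0 < z := by rw [hz]; positivity
  have hrad : (1:ℝ) ^ 2 * z ^ 4 + 2 * 1 * z ^ 3 - 2 * 1 * z ^ 2 + 2 * 1 * z ^ 4
          - z ^ 2 - 2 * z - 2 * z ^ 3 + 1 - 3 * z ^ 4
      = ((1 - v) * (1 + v) / (1 + v + v ^ 2)) ^ 2 := by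
    subst hz; field_simp; ring
  have hqpos : 0 < (1 - v) * (1 + v) / (1 + v + v ^ 2) :=
    div_pos (mul_pos (by linarith) (by linarith)) hs
  have hsqrt : Real.sqrt ((1:ℝ) ^ 2 * z ^ 4 + 2 * 1 * z ^ 3 - 2 * 1 * z ^ 2 + 2 * 1 * z ^ 4
          - z ^ 2 - 2 * z - 2 * z ^ 3 + 1 - 3 * z ^ 4)
      = (1 - v) * (1 + v) / (1 + v + v ^ 2) := by
    rw [hrad, Real.sqrt_sq hqpos.le]
  have hR1 : (1:ℝ) ^ 2 * z ^ 4 + 2 * 1 * z ^ 3 - 2 * 1 * z ^ 2 + 2 * 1 * z ^ 4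
          - z ^ 2 - 2 * z - 2 * z ^ 3 + 1 - 3 * z ^ 4 ≠ 0 := by
    rw [hrad]; positivity
  have hid : HasDerivAt (fun t : ℝ => t) 1 1 := hasDerivAt_id 1
  have hR : HasDerivAt (fun t : ℝ => t ^ 2 * z ^ 4 + 2 * t * z ^ 3 - 2 * t * z ^ 2
        + 2 * t * z ^ 4 - z ^ 2 - 2 * z - 2 * z ^ 3 + 1 - 3 * z ^ 4)
      (4 * z ^ 4 + 2 * z ^ 3 - 2 * z ^ 2) 1 := by
    have h := (((hid.pow 2).mul_const (z ^ 4)).add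
        (hid.const_mul (2 * z ^ 3 - 2 * z ^ 2 + 2 * z ^ 4))).add_const
        (- z ^ 2 - 2 * z - 2 * z ^ 3 + 1 - 3 * z ^ 4)
    refine (congrArg₂ (fun f d => HasDerivAt f d 1) ?_ ?_).mpr h
    · funext t; simp only [Pi.add_apply, Pi.pow_apply]; ring
    · push_cast; ring
  have hsq := hR.sqrt hR1
  beta_reduce at hsq
  have hN : HasDerivAt (fun t : ℝ => -t * z ^ 2 + z + 1 + z ^ 2 -
        Real.sqrt (t ^ 2 * z ^ 4 + 2 * t * z ^ 3 - 2 * t * z ^ 2 + 2 * t * z ^ 4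
          - z ^ 2 - 2 * z - 2 * z ^ 3 + 1 - 3 * z ^ 4))
      (-z ^ 2 - (4 * z ^ 4 + 2 * z ^ 3 - 2 * z ^ 2) /
        (2 * Real.sqrt ((1:ℝ) ^ 2 * z ^ 4 + 2 * 1 * z ^ 3 - 2 * 1 * z ^ 2 + 2 * 1 * z ^ 4
          - z ^ 2 - 2 * z - 2 * z ^ 3 + 1 - 3 * z ^ 4))) 1 := by
    have h := ((hid.const_mul (-z ^ 2)).add_const (z + 1 + z ^ 2)).sub hsq
    refine (congrArg₂ (fun f d => HasDerivAt f d 1) ?_ ?_).mpr h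
    · funext t; simp only [Pi.sub_apply]; ring
    · ring
  have hD : HasDerivAt (fun t : ℝ => 2 * z * (1 + z) * (z ^ 2 - t * z ^ 2 + 1))
      (2 * z * (1 + z) * (-z ^ 2)) 1 := by
    have h := ((((hid.const_mul (z ^ 2)).const_sub (z ^ 2)).add_const 1).const_mul
        (2 * z * (1 + z)))
    refine (congrArg₂ (fun f d => HasDerivAt f d 1) ?_ ?_).mpr h
    · funext t; ring
    · ring
  have hD1 : 2 * z * (1 + z) * (z ^ 2 - 1 * z ^ 2 + 1) ≠ 0 := by
    have : 2 * z * (1 + z) * (z ^ 2 - 1 * z ^ 2 + 1) = 2 * z * (1 + z) := by ring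
    rw [this]; positivity
  have hQ := hN.div hD hD1
  refine hQ.deriv.trans ?_
  rw [hsqrt]
  rw [hz]
  have h1v : (1:ℝ) - v ≠ 0 := by linarith
  have h1v' : (1:ℝ) + v ≠ 0 := by linarith
  field_simp
  ring
end

section
/- For 0 < z < 1/3 and u₂(z) = (1 + z - √(1-2z-3z²))/(2z), the identity Φ(z,u) = (1-zu)/(z(u₁(z)-u)) holds, where u₁(z) = (1+z+√(1-2z-3z²))/(2z), and in particular Φ(z,u) - 1 = z²(1+z)/((1-z-z²)(1+z-u)) · Φ(z,1+z) - z²u/((1-zu)(1+z-u)) · Φ(z,u) whenever all denominators are nonzero. -/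
/-- With `u₁(z) = (1+z+√(1-2z-3z²))/(2z)` and `Φ(z,u) = (1-zu)/(z(u₁-u))`,
the functional equation
`Φ(z,u) - 1 = z²(1+z)/((1-z-z²)(1+z-u))·Φ(z,1+z) - z²u/((1-zu)(1+z-u))·Φ(z,u)`
holds whenever all denominators are nonzero. -/
theorem phi_functional_equation (z u u₁ : ℝ) (hz0 : 0 < z) (hz1 : z < 1 / 3)
    (h1 : u₁ = (1 + z + Real.sqrt (1 - 2 * z - 3 * z ^ 2)) / (2 * z))
    (hzu : z * u ≠ 1) (hu : u ≠ 1 + z) (hu1 : u ≠ u₁) (hu2 : (1 : ℝ) + z ≠ u₁)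
    (hden : 1 - z - z ^ 2 ≠ 0) (hz2 : z * (1 + z) ≠ 1) :
    (1 - z * u) / (z * (u₁ - u)) - 1 =
      z ^ 2 * (1 + z) / ((1 - z - z ^ 2) * (1 + z - u)) *
        ((1 - z * (1 + z)) / (z * (u₁ - (1 + z)))) -
      z ^ 2 * u / ((1 - z * u) * (1 + z - u)) *
        ((1 - z * u) / (z * (u₁ - u))) := by
  have hzne : z ≠ 0 := ne_of_gt hz0
  have hDnn : (0:ℝ) ≤ 1 - 2 * z - 3 * z ^ 2 := by nlinarith
  have hsq : Real.sqrt (1 - 2 * z - 3 * z ^ 2) ^ 2 = 1 - 2 * z - 3 * z ^ 2 :=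
    Real.sq_sqrt hDnn
  have key : z * u₁ ^ 2 - (1 + z) * u₁ + (1 + z) = 0 := by
    subst h1
    field_simp
    nlinarith [hsq, Real.sq_sqrt (show (0:ℝ) ≤ 1 - z * 2 - z ^ 2 * 3 by nlinarith)]
  have h2 : u₁ - u ≠ 0 := sub_ne_zero.mpr (Ne.symm hu1)
  have h3 : (1:ℝ) + z - u ≠ 0 := fun h => hu (by linarith [sub_eq_zero.mp h])
  have h4 : u₁ - (1 + z) ≠ 0 := sub_ne_zero.mpr (Ne.symm hu2)
  have h5 : 1 - z * u ≠ 0 := sub_ne_zero.mpr (Ne.symm hzu)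
  field_simp
  linear_combination (-(1 - z - z ^ 2) * (1 + z - u)) * key
end

section
/- With z = v/(1+v+v²) for 0 < v < 1, the generating function of open Deutsch paths satisfies Φ(z,1)/(1-z) = 1 + v + v², where Φ(z,1) = (1-z)/(z(u₁(z)-1)) and u₁(z) = (1+z+√(1-2z-3z²))/(2z). -/
/-- Open Deutsch paths: `Φ(z,1)/(1-z) = 1 + v + v²` under `z = v/(1+v+v²)`,
with `Φ(z,1) = (1-z)/(z(u₁(z)-1))`. -/
theorem open_deutsch_gf (v z u₁ : ℝ) (hv0 : 0 < v) (hv1 : v < 1)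
    (hz : z = v / (1 + v + v ^ 2))
    (h1 : u₁ = (1 + z + Real.sqrt (1 - 2 * z - 3 * z ^ 2)) / (2 * z)) :
    ((1 - z) / (z * (u₁ - 1))) / (1 - z) = 1 + v + v ^ 2 := by
  have hD : (0:ℝ) < 1 + v + v ^ 2 := by nlinarith
  have hDne : (1 + v + v ^ 2) ≠ 0 := ne_of_gt hD
  have hv : v ≠ 0 := ne_of_gt hv0
  have hsq : 1 - 2 * z - 3 * z ^ 2 = ((1 - v ^ 2) / (1 + v + v ^ 2)) ^ 2 := by
    subst hz; field_simp; ring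
  have hs : Real.sqrt (1 - 2 * z - 3 * z ^ 2) = (1 - v ^ 2) / (1 + v + v ^ 2) := by
    rw [hsq, Real.sqrt_sq (by apply div_nonneg _ hD.le; nlinarith)]
  have hu : u₁ = (1 + v) / v := by
    rw [h1, hs, hz]; field_simp; ring
  have key : z * (u₁ - 1) = 1 / (1 + v + v ^ 2) := by
    rw [hu, hz]; field_simp; ring
  have h1z : (1:ℝ) - z ≠ 0 := by
    rw [hz]; intro h
    have : v = 1 + v + v ^ 2 := by
      field_simp at h; linarith
    nlinarith
  rw [key]
  rw [div_div_eq_mul_div, div_one, mul_comm, mul_div_assoc, div_self h1z, mul_one]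
end
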